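/- arXiv:1211.5238 — 3 statements merged into one kernel-verified Lean document; each statement's English description precedes it below -/
import Mathlib

section
/- Suppose the shift-invariant probability measure ℙ on Ω = 𝒜^ℕ is ψ-mixing (i.e. ψ_0 < ∞ and ψ_m → 0 as m → ∞). Then there exists a constant Γ > 0 such that for every n ≥ 1 and every n-cylinder A ∈ 𝒞_n one has ℙ(A) ≤ e^{−Γ n}. -/
/-!
Every one-letter cylinder has probability at most some `δ < 1`, since two distinct letters carry
positive mass. Choose `m` with `(1 + ψ_m) δ < 1`. An `n`-cylinder lies in the event that fixes only
the coordinates `0, m + 1, 2 (m + 1), …` below `n`; splitting off the first of these coordinates,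
ψ-mixing across the gap of length `m` and shift invariance bound the measure of that event by
`((1 + ψ_m) δ) ^ ⌈n / (m + 1)⌉`.
-/

open MeasureTheory Filter Set ProbabilityTheory
open scoped ENNReal

namespace Nonconv

variable {𝒜 : Type*} [MeasurableSpace 𝒜]

/-- The left shift `T` on the sequence space `ℕ → 𝒜`. -/
def shift : (ℕ → 𝒜) → ℕ → 𝒜 := fun ω i => ω (i + 1)

/-- The `n`-cylinder `[a₀,…,a_{n-1}]` determined by the first `n` symbols of `a`. -/
def cyl (n : ℕ) (a : ℕ → 𝒜) : Set (ℕ → 𝒜) := {ω | ∀ i < n, ω i = a i}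

/-- The sub-σ-algebra `ℱ_I` generated by the coordinates in `I`. -/
def coordSigma (I : Set ℕ) : MeasurableSpace (ℕ → 𝒜) :=
  ⨆ i ∈ I, MeasurableSpace.comap (fun ω => ω i) inferInstance

/-- The set of ratios `|μ(B∩C)/(μ(B)μ(C)) − 1|` over `B ∈ G`, `C ∈ H` with
`μ(B)μ(C) ≠ 0`. -/
def psiSet (μ : Measure (ℕ → 𝒜)) (G H : MeasurableSpace (ℕ → 𝒜)) : Set ℝ :=
  {x | ∃ B C : Set (ℕ → 𝒜), MeasurableSet[G] B ∧ MeasurableSet[H] C ∧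
    μ B ≠ 0 ∧ μ C ≠ 0 ∧
    x = |(μ (B ∩ C)).toReal / ((μ B).toReal * (μ C).toReal) - 1|}

/-- The ψ-dependence coefficient `ψ(G,H)`. -/
noncomputable def psi (μ : Measure (ℕ → 𝒜)) (G H : MeasurableSpace (ℕ → 𝒜)) : ℝ :=
  sSup (psiSet μ G H)

/-- The set whose supremum defines `ψ_m`. -/
def psiMixSet (μ : Measure (ℕ → 𝒜)) (m : ℕ) : Set ℝ :=
  ⋃ n : ℕ, psiSet μ (coordSigma {i | i ≤ n}) (coordSigma {i | n + m + 1 ≤ i})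

/-- The ψ-mixing coefficient `ψ_m = sup_n ψ(ℱ_{0,n}, ℱ_{n+m+1,∞})`. -/
noncomputable def psiMix (μ : Measure (ℕ → 𝒜)) (m : ℕ) : ℝ := sSup (psiMixSet μ m)

/-- `μ` is ψ-mixing: `ψ_0 < ∞` and `ψ_m → 0` as `m → ∞`. -/
def IsPsiMixing (μ : Measure (ℕ → 𝒜)) : Prop :=
  BddAbove (psiMixSet μ 0) ∧ Tendsto (psiMix μ) atTop (nhds 0)

/-- `π(A)` for the cylinder `A = cyl n a`:
the minimal `k ∈ {1,…,n}` with `A ∩ T^{-k}A ≠ ∅`. -/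
noncomputable def piCyl (n : ℕ) (a : ℕ → 𝒜) : ℕ :=
  sInf {k : ℕ | 1 ≤ k ∧ k ≤ n ∧ (cyl n a ∩ shift^[k] ⁻¹' cyl n a).Nonempty}

/-- Periodic extension of the string `a` with period `r`, so that
`cyl m (per r a)` is the cylinder `R^{m/r}` if `R = cyl r a`. -/
def per (r : ℕ) (a : ℕ → 𝒜) : ℕ → 𝒜 := fun i => a (i % r)

/-- `κ = lcm { r / gcd(r, dᵢ) : 1 ≤ i ≤ ℓ }`. -/
def kap (ℓ : ℕ) (d : Fin ℓ → ℕ) (r : ℕ) : ℕ :=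
  Finset.univ.lcm fun i => r / Nat.gcd r (d i)

/-- `ρ_A = ∏ᵢ ℙ(R^{(n+dᵢκ)/r} | A)` for `A = cyl n a`, `r = π(A)`, `R = A(π)`. -/
noncomputable def rho (μ : Measure (ℕ → 𝒜)) (ℓ : ℕ) (d : Fin ℓ → ℕ) (n : ℕ)
    (a : ℕ → 𝒜) : ℝ :=
  ∏ i : Fin ℓ,
    (μ (cyl (n + d i * kap ℓ d (piCyl n a)) (per (piCyl n a) a) ∩ cyl n a)).toReal /
      (μ (cyl n a)).toReal

/-- The multiple recurrence event `{X_k^A = 1} = ∩ᵢ T^{-qᵢ(k)}A`. -/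
def hitEvent (ℓ : ℕ) (q : Fin ℓ → ℕ → ℕ) (A : Set (ℕ → 𝒜)) (k : ℕ) : Set (ℕ → 𝒜) :=
  {ω | ∀ i : Fin ℓ, shift^[q i k] ω ∈ A}

/-- The nonconventional sum `S_N^A = ∑_{k=1}^N ∏ᵢ 1_A ∘ T^{qᵢ(k)}`. -/
noncomputable def SN (ℓ : ℕ) (q : Fin ℓ → ℕ → ℕ) (A : Set (ℕ → 𝒜)) (N : ℕ)
    (ω : ℕ → 𝒜) : ℕ :=
  ∑ k ∈ Finset.Icc 1 N, Set.indicator (hitEvent ℓ q A k) (fun _ => 1) ω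

/-- The probability a Poisson random variable with parameter `t` lies in `L`. -/
noncomputable def poissonProb (t : ℝ) (L : Set ℕ) : ℝ :=
  ∑' l : L, Real.exp (-t) * t ^ (l : ℕ) / Nat.factorial (l : ℕ)

/-- `℘(x) = x eˣ`. -/
noncomputable def wp (x : ℝ) : ℝ := x * Real.exp x

/-- `g(n) = inf_{k ≥ n} min_{1 ≤ i ≤ ℓ-1} (q_{i+1}(k) − q_i(k))`, valued in `ℕ∞`. -/
noncomputable def gfun (ℓ : ℕ) (q : Fin ℓ → ℕ → ℕ) (n : ℕ) : ℕ∞ :=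
  ⨅ (k : ℕ) (_ : n ≤ k) (i : Fin ℓ) (j : Fin ℓ) (_ : (i : ℕ) + 1 = (j : ℕ)),
    ((q j k - q i k : ℕ) : ℕ∞)

/-- `γ(n) = min {k ≥ 0 : g(k) ≥ 2n}`. -/
noncomputable def gam (ℓ : ℕ) (q : Fin ℓ → ℕ → ℕ) (n : ℕ) : ℕ :=
  sInf {k : ℕ | ((2 * n : ℕ) : ℕ∞) ≤ gfun ℓ q k}

/-- The nonconventional hitting time
`τ_A(ω) = min {k ≥ 1 : ∏ᵢ 1_A(T^{dᵢk}ω) = 1}`, valued in `ℝ≥0∞` (equal to `∞` if no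
such `k` exists). -/
noncomputable def tauA (ℓ : ℕ) (d : Fin ℓ → ℕ) (A : Set (ℕ → 𝒜)) (ω : ℕ → 𝒜) : ℝ≥0∞ :=
  sInf {x : ℝ≥0∞ | ∃ k : ℕ, 1 ≤ k ∧ (∀ i : Fin ℓ, shift^[d i * k] ω ∈ A) ∧ x = (k : ℝ≥0∞)}


omit [MeasurableSpace 𝒜] in
lemma shift_iterate_apply (t : ℕ) (ω : ℕ → 𝒜) (i : ℕ) :
    (shift^[t] ω) i = ω (i + t) := by
  induction t generalizing ω i with
  | zero => rfl
  | succ t ih => rw [Function.iterate_succ_apply, ih]; rfl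

omit [MeasurableSpace 𝒜] in
lemma cyl_one (a : ℕ → 𝒜) : cyl 1 a = {ω | ω 0 = a 0} := by
  ext ω; simp [cyl]

lemma coordSigma_mono {I J : Set ℕ} (h : I ⊆ J) :
    coordSigma (𝒜 := 𝒜) I ≤ coordSigma J :=
  iSup₂_le fun i hi => le_iSup₂ (f := fun i (_ : i ∈ J) =>
    MeasurableSpace.comap (fun ω : ℕ → 𝒜 => ω i) inferInstance) i (h hi)

lemma measurableSet_coord_eq [MeasurableSingletonClass 𝒜] {I : Set ℕ} {t : ℕ}
    (ht : t ∈ I) (c : 𝒜) : MeasurableSet[coordSigma I] {ω : ℕ → 𝒜 | ω t = c} :=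
  le_iSup₂ (f := fun i (_ : i ∈ I) =>
    MeasurableSpace.comap (fun ω : ℕ → 𝒜 => ω i) inferInstance) t ht _
    ⟨{c}, measurableSet_singleton c, rfl⟩

lemma psiSet_mono {μ : Measure (ℕ → 𝒜)} {G G' H H' : MeasurableSpace (ℕ → 𝒜)}
    (hG : G ≤ G') (hH : H ≤ H') : psiSet μ G H ⊆ psiSet μ G' H' := by
  rintro x ⟨B, C, hB, hC, hB0, hC0, rfl⟩
  exact ⟨B, C, hG _ hB, hH _ hC, hB0, hC0, rfl⟩

lemma psiMixSet_anti (μ : Measure (ℕ → 𝒜)) {m m' : ℕ} (h : m' ≤ m) :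
    psiMixSet μ m ⊆ psiMixSet μ m' := by
  refine iUnion_subset fun n => subset_iUnion_of_subset (n + (m - m')) ?_
  refine psiSet_mono (coordSigma_mono fun i hi => ?_) (coordSigma_mono fun i hi => ?_)
  · exact le_add_right (show i ≤ n from hi)
  · simp only [mem_ofPred_eq] at hi ⊢; omega

lemma psiMix_nonneg (μ : Measure (ℕ → 𝒜)) (m : ℕ) : 0 ≤ psiMix μ m := by
  refine Real.sSup_nonneg fun x hx => ?_
  obtain ⟨n, B, C, -, -, -, -, rfl⟩ := mem_iUnion.mp hx
  exact abs_nonneg _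

lemma measureReal_inter_le_one_add_psiMix {μ : Measure (ℕ → 𝒜)} [IsFiniteMeasure μ]
    (hbdd : BddAbove (psiMixSet μ 0)) {n m : ℕ} {B C : Set (ℕ → 𝒜)}
    (hB : MeasurableSet[coordSigma {i | i ≤ n}] B)
    (hC : MeasurableSet[coordSigma {i | n + m + 1 ≤ i}] C) :
    μ.real (B ∩ C) ≤ (1 + psiMix μ m) * μ.real B * μ.real C := by
  by_cases hB0 : μ B = 0
  · simp [measureReal_def, hB0, measure_mono_null inter_subset_left hB0]
  by_cases hC0 : μ C = 0
  · simp [measureReal_def, hC0, measure_mono_null inter_subset_right hC0]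
  have hBC : 0 < μ.real B * μ.real C :=
    mul_pos (ENNReal.toReal_pos hB0 (measure_ne_top μ B))
      (ENNReal.toReal_pos hC0 (measure_ne_top μ C))
  have hratio : μ.real (B ∩ C) / (μ.real B * μ.real C) - 1 ≤ psiMix μ m :=
    (le_abs_self _).trans <| le_csSup (hbdd.mono (psiMixSet_anti μ m.zero_le))
      (mem_iUnion.mpr ⟨n, B, C, hB, hC, hB0, hC0, rfl⟩)
  rw [mul_assoc, ← div_le_iff₀ hBC]
  linarith

lemma exists_lt_one_forall_measureReal_singleton_le {α : Type*} [MeasurableSpace α]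
    [MeasurableSingletonClass α] [Nontrivial α] (ν : Measure α) [IsProbabilityMeasure ν]
    (hpos : ∀ a, 0 < ν {a}) : ∃ δ, 0 < δ ∧ δ < 1 ∧ ∀ a, ν.real {a} ≤ δ := by
  obtain ⟨a, b, hab⟩ := exists_pair_ne α
  have hpos' : ∀ c, 0 < ν.real {c} := fun c => ENNReal.toReal_pos (hpos c).ne' (by simp)
  have hle : ∀ c d : α, c ≠ d → ν.real {c} ≤ 1 - ν.real {d} := fun c d hcd => by
    rw [← probReal_compl_eq_one_sub (measurableSet_singleton d)]
    exact measureReal_mono (by simpa using hcd.symm)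
  refine ⟨max (1 - ν.real {a}) (1 - ν.real {b}), ?_, ?_, fun c => ?_⟩
  · exact (hpos' b).trans_le ((hle b a hab.symm).trans (le_max_left _ _))
  · exact max_lt (by linarith [hpos' a]) (by linarith [hpos' b])
  · rcases eq_or_ne c a with rfl | hca
    · exact (hle c b hab).trans (le_max_right _ _)
    · exact (hle c a hca).trans (le_max_left _ _)

def sparseCyl (g k : ℕ) (a : ℕ → 𝒜) : Set (ℕ → 𝒜) := {ω | ∀ j < k, ω (j * g) = a (j * g)}

omit [MeasurableSpace 𝒜] in
lemma cyl_subset_sparseCyl {g : ℕ} (hg : 0 < g) (n : ℕ) (a : ℕ → 𝒜) :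
    cyl n a ⊆ sparseCyl g ((n + g - 1) / g) a := fun ω hω j hj =>
  hω _ <| by
    have := (Nat.le_div_iff_mul_le hg).mp hj
    rw [Nat.succ_mul] at this
    omega

omit [MeasurableSpace 𝒜] in
lemma le_add_sub_one_div_mul (n : ℕ) {g : ℕ} (hg : 0 < g) : n ≤ (n + g - 1) / g * g := by
  have := Nat.lt_div_mul_add (a := n + g - 1) hg
  omega

omit [MeasurableSpace 𝒜] in
lemma sparseCyl_succ (g k : ℕ) (a : ℕ → 𝒜) :
    sparseCyl g (k + 1) a = {ω | ω 0 = a 0} ∩ shift^[g] ⁻¹' sparseCyl g k (shift^[g] a) := by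
  ext ω
  simp only [sparseCyl, mem_inter_iff, mem_preimage, mem_ofPred_eq, shift_iterate_apply,
    ← Nat.succ_mul, Nat.forall_lt_succ_left, zero_mul]

lemma measurableSet_sparseCyl [MeasurableSingletonClass 𝒜] (g k : ℕ) (a : ℕ → 𝒜) :
    MeasurableSet (sparseCyl g k a) := by
  simp only [sparseCyl, ofPred_forall]
  exact .iInter fun j => .iInter fun _ => measurable_pi_apply _ (measurableSet_singleton _)

lemma measurableSet_preimage_sparseCyl [MeasurableSingletonClass 𝒜] (g k : ℕ)
    (a : ℕ → 𝒜) : MeasurableSet[coordSigma {i | g ≤ i}] (shift^[g] ⁻¹' sparseCyl g k a) := by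
  simp only [sparseCyl, ofPred_forall, preimage_iInter, preimage_ofPred_eq, shift_iterate_apply]
  exact .iInter fun j => .iInter fun _ => measurableSet_coord_eq (by simp) _

lemma measureReal_sparseCyl_le [MeasurableSingletonClass 𝒜] {μ : Measure (ℕ → 𝒜)}
    [IsProbabilityMeasure μ] (hinv : MeasurePreserving shift μ μ) {g : ℕ} {c δ : ℝ}
    (hc : 0 ≤ c) (hletter : ∀ x : 𝒜, μ.real {ω | ω 0 = x} ≤ δ)
    (hmix : ∀ B C, MeasurableSet[coordSigma {i | i ≤ 0}] B →
      MeasurableSet[coordSigma {i | g ≤ i}] C → μ.real (B ∩ C) ≤ c * μ.real B * μ.real C)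
    (k : ℕ) (a : ℕ → 𝒜) : μ.real (sparseCyl g k a) ≤ (c * δ) ^ k := by
  induction k generalizing a with
  | zero => simp [sparseCyl]
  | succ k ih =>
    have hδ : 0 ≤ δ := measureReal_nonneg.trans (hletter (a 0))
    rw [sparseCyl_succ]
    calc _ ≤ c * μ.real {ω | ω 0 = a 0} * μ.real (shift^[g] ⁻¹' sparseCyl g k (shift^[g] a)) :=
          hmix _ _ (measurableSet_coord_eq (by simp) _) (measurableSet_preimage_sparseCyl g k _)
      _ = c * μ.real {ω | ω 0 = a 0} * μ.real (sparseCyl g k (shift^[g] a)) := by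
          rw [(hinv.iterate g).measureReal_preimage
            (measurableSet_sparseCyl g k _).nullMeasurableSet]
      _ ≤ c * δ * (c * δ) ^ k := by
          gcongr
          exacts [hletter _, ih _]
      _ = (c * δ) ^ (k + 1) := (pow_succ' _ _).symm

lemma pow_le_exp_neg_mul {θ L : ℝ} (hθ0 : 0 < θ) (hθ1 : θ ≤ 1) (hL : 0 < L) {n K : ℕ}
    (hnK : (n : ℝ) ≤ K * L) : θ ^ K ≤ Real.exp (-(-Real.log θ / L) * n) := by
  rw [← Real.exp_log (pow_pos hθ0 K), Real.exp_le_exp, Real.log_pow]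
  have hnL : (n : ℝ) / L ≤ K := (div_le_iff₀ hL).mpr hnK
  calc (K : ℝ) * Real.log θ ≤ n / L * Real.log θ :=
        mul_le_mul_of_nonpos_right hnL (Real.log_nonpos hθ0.le hθ1)
    _ = -(-Real.log θ / L) * n := by ring

theorem exists_exponential_cylinder_bound_general
    [MeasurableSingletonClass 𝒜] [Nontrivial 𝒜]
    (μ : Measure (ℕ → 𝒜)) [IsProbabilityMeasure μ]
    (hinv : MeasurePreserving (shift : (ℕ → 𝒜) → ℕ → 𝒜) μ μ)
    (hpos : ∀ a : 𝒜, 0 < μ (cyl 1 fun _ => a))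
    (hmix : IsPsiMixing μ) :
    ∃ Γ : ℝ, 0 < Γ ∧ ∀ n : ℕ, 1 ≤ n → ∀ a : ℕ → 𝒜,
      μ (cyl n a) ≤ ENNReal.ofReal (Real.exp (-Γ * n)) := by
  have hmap : ∀ x : 𝒜, μ.map (· 0) {x} = μ {ω | ω 0 = x} := fun x =>
    Measure.map_apply (measurable_pi_apply 0) (measurableSet_singleton x)
  have := Measure.isProbabilityMeasure_map (μ := μ) (measurable_pi_apply 0).aemeasurable
  obtain ⟨δ, hδ0, hδ1, hletter⟩ := exists_lt_one_forall_measureReal_singleton_le (μ.map (· 0))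
    fun x => by simpa [hmap, cyl_one] using hpos x
  obtain ⟨m, hm⟩ : ∃ m, (1 + psiMix μ m) * δ < 1 :=
    (((hmix.2.const_add 1).mul_const δ).eventually (gt_mem_nhds (by simpa using hδ1))).exists
  set θ := (1 + psiMix μ m) * δ
  have hθ0 : 0 < θ := mul_pos (by linarith [psiMix_nonneg μ m]) hδ0
  refine ⟨-Real.log θ / (m + 1), div_pos (neg_pos.mpr (Real.log_neg hθ0 hm)) (by positivity),
    fun n _ a => ?_⟩
  have hcyl : μ.real (cyl n a) ≤ θ ^ ((n + (m + 1) - 1) / (m + 1)) :=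
    (measureReal_mono (cyl_subset_sparseCyl m.succ_pos n a)).trans <|
      measureReal_sparseCyl_le hinv (by linarith [psiMix_nonneg μ m])
        (fun x => by simpa [measureReal_def, hmap] using hletter x)
        (fun B C hB hC => measureReal_inter_le_one_add_psiMix hmix.1 hB (by rwa [zero_add]))
        _ a
  rw [← ofReal_measureReal]
  refine ENNReal.ofReal_le_ofReal (hcyl.trans (pow_le_exp_neg_mul hθ0 hm.le (by positivity) ?_))
  exact_mod_cast le_add_sub_one_div_mul n m.succ_pos

/-- Lemma 3.1. If the shift-invariant probability measure `μ` on
`𝒜^ℕ` is ψ-mixing, then there is `Γ > 0` such that `μ(A) ≤ e^{-Γn}` for every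
`n ≥ 1` and every `n`-cylinder `A`. -/
theorem exists_exponential_cylinder_bound
    [Countable 𝒜] [MeasurableSingletonClass 𝒜] [Nontrivial 𝒜]
    (μ : Measure (ℕ → 𝒜)) [IsProbabilityMeasure μ]
    (hinv : MeasurePreserving (shift : (ℕ → 𝒜) → ℕ → 𝒜) μ μ)
    (hpos : ∀ a : 𝒜, 0 < μ (cyl 1 fun _ => a))
    (hmix : IsPsiMixing μ) :
    ∃ Γ : ℝ, 0 < Γ ∧ ∀ n : ℕ, 1 ≤ n → ∀ a : ℕ → 𝒜,
      μ (cyl n a) ≤ ENNReal.ofReal (Real.exp (-Γ * n)) :=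
  exists_exponential_cylinder_bound_general μ hinv hpos hmix

end Nonconv
end

section
/- Assume ℙ is ψ-mixing. Then sup{ ρ_A : n ≥ 1, A ∈ 𝒞_n with ℙ(A) > 0 } < 1. -/
open MeasureTheory Filter Set ProbabilityTheory
open scoped ENNReal

namespace Nonconv

variable {𝒜 : Type*} [MeasurableSpace 𝒜]

/-! ### Auxiliary lemmas for `rho_sup_lt_one` -/

lemma shift_iterate (k : ℕ) (ω : ℕ → 𝒜) (i : ℕ) : (shift^[k] ω) i = ω (i + k) := by
  induction k generalizing ω with
  | zero => rfl
  | succ k ih =>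
    rw [Function.iterate_succ_apply, ih]
    rfl

lemma measurableSet_cyl [Countable 𝒜] [MeasurableSingletonClass 𝒜] (n : ℕ) (a : ℕ → 𝒜) :
    MeasurableSet (cyl n a) := by
  have h : cyl n a = ⋂ (i : ℕ) (_ : i < n), (fun ω : ℕ → 𝒜 => ω i) ⁻¹' {a i} := by
    ext ω; simp [cyl]
  rw [h]
  exact MeasurableSet.iInter fun i => MeasurableSet.iInter fun _ =>
    (measurable_pi_apply i) (measurableSet_singleton _)

lemma measurableSet_coord [MeasurableSingletonClass 𝒜] {I : Set ℕ} {i : ℕ} (hi : i ∈ I)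
    (z : 𝒜) : MeasurableSet[coordSigma I] {ω : ℕ → 𝒜 | ω i = z} := by
  have h1 : MeasurableSet[MeasurableSpace.comap (fun ω : ℕ → 𝒜 => ω i) inferInstance]
      {ω : ℕ → 𝒜 | ω i = z} := ⟨{z}, measurableSet_singleton z, by ext ω; simp⟩
  have h2 : MeasurableSpace.comap (fun ω : ℕ → 𝒜 => ω i) inferInstance ≤ coordSigma I :=
    le_biSup (f := fun j : ℕ => MeasurableSpace.comap (fun ω : ℕ → 𝒜 => ω j) inferInstance) hi
  exact h2 _ h1

set_option maxHeartbeats 1000000 in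
lemma measurableSet_cyl_coord [MeasurableSingletonClass 𝒜] {N : ℕ} (n : ℕ) (a : ℕ → 𝒜)
    (h : ∀ i, i < n → i ≤ N) :
    MeasurableSet[coordSigma {i : ℕ | i ≤ N}] (cyl n a) := by
  have hh : cyl n a = ⋂ (i : Fin n), {ω : ℕ → 𝒜 | ω (i : ℕ) = a (i : ℕ)} := by
    ext ω
    simp only [cyl, Set.mem_iInter, Set.mem_setOf_eq]
    exact ⟨fun hω i => hω i i.isLt, fun hω i hi => hω ⟨i, hi⟩⟩
  rw [hh]
  refine MeasurableSet.iInter fun i => ?_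
  exact measurableSet_coord (I := {j : ℕ | j ≤ N}) (i := (i : ℕ))
    (show (i : ℕ) ∈ {j : ℕ | j ≤ N} from h i i.isLt) (a i)

lemma psi_ratio_le (μ : Measure (ℕ → 𝒜)) (hbdd : BddAbove (psiMixSet μ 0)) (m₀ nn : ℕ)
    {B C : Set (ℕ → 𝒜)} (hB : MeasurableSet[coordSigma {i : ℕ | i ≤ nn}] B)
    (hC : MeasurableSet[coordSigma {i : ℕ | nn + m₀ + 1 ≤ i}] C)
    (hB0 : μ B ≠ 0) (hC0 : μ C ≠ 0) :
    |(μ (B ∩ C)).toReal / ((μ B).toReal * (μ C).toReal) - 1| ≤ psiMix μ m₀ := by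
  have hsub : psiMixSet μ m₀ ⊆ psiMixSet μ 0 := by
    intro x hx
    rcases mem_iUnion.mp hx with ⟨n', hx'⟩
    rcases hx' with ⟨B', C', hB', hC', h0, h1, hxe⟩
    refine mem_iUnion.mpr ⟨n' + m₀, ⟨B', C', ?_, ?_, h0, h1, hxe⟩⟩
    · exact coordSigma_mono (fun i (hi : i ≤ n') => le_trans hi (Nat.le_add_right _ _)) _ hB'
    · exact hC'
  apply le_csSup (hbdd.mono hsub)
  exact mem_iUnion.mpr ⟨nn, ⟨B, C, hB, hC, hB0, hC0, rfl⟩⟩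

/-- The core estimate: for any `r`-periodic pattern `b`, the conditional probability of
extending an `n`-cylinder of the pattern by one more period is uniformly bounded away
from `1`. -/
lemma core_ratio [Countable 𝒜] [MeasurableSingletonClass 𝒜]
    (μ : Measure (ℕ → 𝒜)) [IsProbabilityMeasure μ]
    (hinv : MeasurePreserving (shift : (ℕ → 𝒜) → ℕ → 𝒜) μ μ)
    (hbdd : BddAbove (psiMixSet μ 0))
    (ε : ℝ) (hε : 0 < ε) (m₀ : ℕ) (hψ : psiMix μ m₀ < ε / 2)
    (hsym : ∀ z : 𝒜, (μ (cyl 1 (fun _ => z))).toReal ≤ 1 - ε)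
    (hposz : ∀ z : 𝒜, μ (cyl 1 (fun _ => z)) ≠ 0)
    (b : ℕ → 𝒜) (r n : ℕ) (hr1 : 1 ≤ r) (hn : 1 ≤ n)
    (hbp : ∀ i, b (i + r) = b i) (hq0 : μ (cyl n b) ≠ 0) :
    (μ (cyl (n + r) b)).toReal ≤
      (1 - (1 - (1 + ε / 2) * (1 - ε)) / (m₀ + 1 : ℝ)) * (μ (cyl n b)).toReal := by
  set K : ℕ := m₀ + 1 with hK
  have hcylmono : ∀ {L L' : ℕ}, L ≤ L' → cyl L' b ⊆ cyl L b := by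
    intro L L' h ω hω i hi
    exact hω i (lt_of_lt_of_le hi h)
  -- the key concavity identity
  have hinter : ∀ L : ℕ, cyl r b ∩ (shift^[r]) ⁻¹' (cyl L b) = cyl (L + r) b := by
    intro L
    ext ω
    constructor
    · rintro ⟨h1, h2⟩ j hj
      by_cases hjr : j < r
      · exact h1 j hjr
      · push_neg at hjr
        have hjL : j - r < L := by omega
        have h3 : (shift^[r] ω) (j - r) = b (j - r) := h2 (j - r) hjL
        rw [shift_iterate] at h3
        rw [Nat.sub_add_cancel hjr] at h3
        have h4 := hbp (j - r)
        rw [Nat.sub_add_cancel hjr] at h4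
        rw [h3]
        exact h4.symm
    · intro h
      refine ⟨fun i hi => h i (by omega), ?_⟩
      intro i hi
      show (shift^[r] ω) i = b i
      rw [shift_iterate, h (i + r) (by omega), hbp]
  have hmp : ∀ L : ℕ, μ ((shift^[r]) ⁻¹' (cyl L b)) = μ (cyl L b) := by
    intro L
    exact (hinv.iterate r).measure_preimage (measurableSet_cyl L b).nullMeasurableSet
  have hdiffR : ∀ L : ℕ,
      (μ (cyl L b)).toReal - (μ (cyl (L + r) b)).toReal
        = (μ ((shift^[r]) ⁻¹' (cyl L b) \ cyl r b)).toReal := by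
    intro L
    have h1 : μ ((shift^[r]) ⁻¹' (cyl L b) ∩ cyl r b)
        + μ ((shift^[r]) ⁻¹' (cyl L b) \ cyl r b) = μ ((shift^[r]) ⁻¹' (cyl L b)) :=
      measure_inter_add_diff _ (measurableSet_cyl r b)
    rw [Set.inter_comm, hinter L, hmp L] at h1
    have h2 := congrArg ENNReal.toReal h1
    rw [ENNReal.toReal_add (measure_ne_top _ _) (measure_ne_top _ _)] at h2
    linarith
  have hstep : ∀ k : ℕ,
      (μ (cyl (n + k * r) b)).toReal - (μ (cyl (n + k * r + r) b)).toReal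
        ≤ (μ (cyl n b)).toReal - (μ (cyl (n + r) b)).toReal := by
    intro k
    rw [hdiffR (n + k * r), hdiffR n]
    apply ENNReal.toReal_mono (measure_ne_top _ _)
    apply measure_mono
    exact diff_subset_diff_left (preimage_mono (hcylmono (Nat.le_add_right _ _)))
  have htel : (μ (cyl n b)).toReal - (μ (cyl (n + K * r) b)).toReal
      ≤ (K : ℝ) * ((μ (cyl n b)).toReal - (μ (cyl (n + r) b)).toReal) := by
    have hsum := Finset.sum_range_sub' (f := fun k => (μ (cyl (n + k * r) b)).toReal) K
    have h0 : n + 0 * r = n := by ring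
    calc (μ (cyl n b)).toReal - (μ (cyl (n + K * r) b)).toReal
        = ∑ k ∈ Finset.range K,
            ((μ (cyl (n + k * r) b)).toReal - (μ (cyl (n + (k + 1) * r) b)).toReal) := by
          rw [hsum, h0]
      _ ≤ ∑ _k ∈ Finset.range K,
            ((μ (cyl n b)).toReal - (μ (cyl (n + r) b)).toReal) := by
          apply Finset.sum_le_sum
          intro k _
          have harr : n + (k + 1) * r = n + k * r + r := by ring
          rw [harr]
          exact hstep k
      _ = (K : ℝ) * ((μ (cyl n b)).toReal - (μ (cyl (n + r) b)).toReal) := by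
          rw [Finset.sum_const, Finset.card_range, nsmul_eq_mul]
  -- the mixing window bound
  have hwin : (μ (cyl (n + K * r) b)).toReal
      ≤ ((1 + ε / 2) * (1 - ε)) * (μ (cyl n b)).toReal := by
    set j : ℕ := n + m₀ with hj
    set C : Set (ℕ → 𝒜) := {ω : ℕ → 𝒜 | ω j = b j} with hC
    have hCpre : C = (shift^[j]) ⁻¹' (cyl 1 (fun _ => b j)) := by
      ext ω
      constructor
      · intro h i hi
        have hi0 : i = 0 := by omega
        subst hi0
        rw [shift_iterate, zero_add]
        exact h
      · intro h
        have h0 := h 0 Nat.one_pos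
        rw [shift_iterate, zero_add] at h0
        exact h0
    have hμC : μ C = μ (cyl 1 (fun _ => b j)) := by
      rw [hCpre]
      exact (hinv.iterate j).measure_preimage (measurableSet_cyl 1 _).nullMeasurableSet
    have hC0 : μ C ≠ 0 := by rw [hμC]; exact hposz _
    have hCle : (μ C).toReal ≤ 1 - ε := by rw [hμC]; exact hsym _
    have hBmeas : MeasurableSet[coordSigma {i : ℕ | i ≤ n - 1}] (cyl n b) :=
      measurableSet_cyl_coord n b (fun i hi => by omega)
    have hCmeas : MeasurableSet[coordSigma {i : ℕ | (n - 1) + m₀ + 1 ≤ i}] C := by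
      apply measurableSet_coord
      show (n - 1) + m₀ + 1 ≤ j
      omega
    have hpsi := psi_ratio_le μ hbdd m₀ (n - 1) hBmeas hCmeas hq0 hC0
    have hBpos : 0 < (μ (cyl n b)).toReal := ENNReal.toReal_pos hq0 (measure_ne_top _ _)
    have hCpos : 0 < (μ C).toReal := ENNReal.toReal_pos hC0 (measure_ne_top _ _)
    have hratio : (μ (cyl n b ∩ C)).toReal
        ≤ (1 + ε / 2) * ((μ (cyl n b)).toReal * (μ C).toReal) := by
      have h1 : (μ (cyl n b ∩ C)).toReal / ((μ (cyl n b)).toReal * (μ C).toReal) - 1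
          ≤ ε / 2 := le_trans (le_trans (le_abs_self _) hpsi) (le_of_lt hψ)
      have hden : 0 < (μ (cyl n b)).toReal * (μ C).toReal := mul_pos hBpos hCpos
      have h2 : (μ (cyl n b ∩ C)).toReal / ((μ (cyl n b)).toReal * (μ C).toReal)
          ≤ 1 + ε / 2 := by linarith
      calc (μ (cyl n b ∩ C)).toReal
          = ((μ (cyl n b ∩ C)).toReal / ((μ (cyl n b)).toReal * (μ C).toReal)) *
            ((μ (cyl n b)).toReal * (μ C).toReal) := by field_simp
        _ ≤ (1 + ε / 2) * ((μ (cyl n b)).toReal * (μ C).toReal) :=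
            mul_le_mul_of_nonneg_right h2 hden.le
    have hKr : K ≤ K * r := by
      calc K = K * 1 := (mul_one K).symm
        _ ≤ K * r := Nat.mul_le_mul_left K hr1
    have hsub : cyl (n + K * r) b ⊆ cyl n b ∩ C := by
      intro ω h
      refine ⟨fun i hi => h i (by omega), ?_⟩
      show ω j = b j
      exact h j (by omega)
    calc (μ (cyl (n + K * r) b)).toReal
        ≤ (μ (cyl n b ∩ C)).toReal :=
          ENNReal.toReal_mono (measure_ne_top _ _) (measure_mono hsub)
      _ ≤ (1 + ε / 2) * ((μ (cyl n b)).toReal * (μ C).toReal) := hratio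
      _ ≤ (1 + ε / 2) * ((μ (cyl n b)).toReal * (1 - ε)) := by
          apply mul_le_mul_of_nonneg_left _ (by linarith)
          exact mul_le_mul_of_nonneg_left hCle ENNReal.toReal_nonneg
      _ = ((1 + ε / 2) * (1 - ε)) * (μ (cyl n b)).toReal := by ring
  -- combine
  have hKpos : (0 : ℝ) < (K : ℝ) := by
    rw [hK]
    positivity
  have h1 : (1 - (1 + ε / 2) * (1 - ε)) * (μ (cyl n b)).toReal
      ≤ (μ (cyl n b)).toReal - (μ (cyl (n + K * r) b)).toReal := by
    have e : (1 - (1 + ε / 2) * (1 - ε)) * (μ (cyl n b)).toReal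
        = (μ (cyl n b)).toReal - ((1 + ε / 2) * (1 - ε)) * (μ (cyl n b)).toReal := by ring
    rw [e]
    linarith [hwin]
  have h2 : (1 - (1 + ε / 2) * (1 - ε)) * (μ (cyl n b)).toReal
      ≤ (K : ℝ) * ((μ (cyl n b)).toReal - (μ (cyl (n + r) b)).toReal) := le_trans h1 htel
  have hKcast : (K : ℝ) = (m₀ : ℝ) + 1 := by rw [hK]; push_cast; ring
  rw [hKcast] at h2 hKpos
  have h3 : (1 - (1 + ε / 2) * (1 - ε)) * (μ (cyl n b)).toReal / ((m₀ : ℝ) + 1)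
      ≤ (μ (cyl n b)).toReal - (μ (cyl (n + r) b)).toReal := by
    rw [div_le_iff₀ hKpos]
    linarith [h2]
  have e2 : (1 - (1 - (1 + ε / 2) * (1 - ε)) / ((m₀ : ℝ) + 1)) * (μ (cyl n b)).toReal
      = (μ (cyl n b)).toReal
        - (1 - (1 + ε / 2) * (1 - ε)) * (μ (cyl n b)).toReal / ((m₀ : ℝ) + 1) := by
    field_simp
  have : (1 - (1 - (1 + ε / 2) * (1 - ε)) / ((m₀ : ℝ) + 1)) * (μ (cyl n b)).toReal
      ≥ (μ (cyl (n + r) b)).toReal := by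
    rw [e2]
    linarith [h3]
  exact this

/-- Lemma 3.8 / (2.12). If `μ` is ψ-mixing then
`sup {ρ_A : A ∈ 𝒞_n, n ≥ 1, μ(A) > 0} < 1`. -/
theorem rho_sup_lt_one
    [Countable 𝒜] [MeasurableSingletonClass 𝒜] [Nontrivial 𝒜]
    (μ : Measure (ℕ → 𝒜)) [IsProbabilityMeasure μ]
    (hinv : MeasurePreserving (shift : (ℕ → 𝒜) → ℕ → 𝒜) μ μ)
    (hpos : ∀ a : 𝒜, 0 < μ (cyl 1 fun _ => a))
    (hmix : IsPsiMixing μ)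
    (ℓ : ℕ) (hl : 0 < ℓ) (d : Fin ℓ → ℕ) (hd1 : ∀ i, 1 ≤ d i) (hdmono : StrictMono d) :
    ∃ c : ℝ, c < 1 ∧ ∀ n : ℕ, 1 ≤ n → ∀ a : ℕ → 𝒜, μ (cyl n a) ≠ 0 →
      rho μ ℓ d n a ≤ c := by
  classical
  obtain ⟨y₁, y₂, hy12⟩ := exists_pair_ne 𝒜
  set ε : ℝ := min (μ (cyl 1 (fun _ => y₁))).toReal (μ (cyl 1 (fun _ => y₂))).toReal
    with hε_def
  have hε : 0 < ε := lt_min (ENNReal.toReal_pos (hpos y₁).ne' (measure_ne_top _ _))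
    (ENNReal.toReal_pos (hpos y₂).ne' (measure_ne_top _ _))
  obtain ⟨m₀, hψ⟩ : ∃ m₀, psiMix μ m₀ < ε / 2 :=
    (hmix.2.eventually (Iio_mem_nhds (by linarith : (0 : ℝ) < ε / 2))).exists
  -- every single symbol has probability at most 1 - ε
  have hsym : ∀ z : 𝒜, (μ (cyl 1 (fun _ => z))).toReal ≤ 1 - ε := by
    intro z
    have key : ∀ y : 𝒜, y ≠ z →
        (μ (cyl 1 (fun _ : ℕ => z))).toReal + (μ (cyl 1 (fun _ : ℕ => y))).toReal ≤ 1 := by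
      intro y hyz
      have hdisj : Disjoint (cyl 1 (fun _ : ℕ => z)) (cyl 1 (fun _ : ℕ => y)) := by
        rw [Set.disjoint_left]
        intro ω h1 h2
        exact hyz ((h2 0 Nat.one_pos).symm.trans (h1 0 Nat.one_pos))
      have hu : μ (cyl 1 (fun _ : ℕ => z) ∪ cyl 1 (fun _ : ℕ => y))
          = μ (cyl 1 (fun _ : ℕ => z)) + μ (cyl 1 (fun _ : ℕ => y)) :=
        measure_union hdisj (measurableSet_cyl 1 _)
      have hle : μ (cyl 1 (fun _ : ℕ => z) ∪ cyl 1 (fun _ : ℕ => y)) ≤ 1 := prob_le_one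
      rw [hu] at hle
      have h2 := ENNReal.toReal_mono ENNReal.one_ne_top hle
      rw [ENNReal.toReal_add (measure_ne_top _ _) (measure_ne_top _ _)] at h2
      simpa using h2
    by_cases h : z = y₁
    · have h1 := key y₂ (by rw [h]; exact hy12.symm)
      have h2 : ε ≤ (μ (cyl 1 (fun _ => y₂))).toReal := by
        rw [hε_def]; exact min_le_right _ _
      linarith
    · have h1 := key y₁ (fun hh => h hh.symm)
      have h2 : ε ≤ (μ (cyl 1 (fun _ => y₁))).toReal := by
        rw [hε_def]; exact min_le_left _ _
      linarith
  have hc1 : 0 < 1 - (1 + ε / 2) * (1 - ε) := by nlinarith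
  refine ⟨1 - (1 - (1 + ε / 2) * (1 - ε)) / (m₀ + 1 : ℝ), ?_, ?_⟩
  · have hm : (0 : ℝ) < (m₀ : ℝ) + 1 := by positivity
    have hd : 0 < (1 - (1 + ε / 2) * (1 - ε)) / ((m₀ : ℝ) + 1) := div_pos hc1 hm
    linarith
  intro n hn a ha
  -- facts about the minimal period r
  have hSne : ({k : ℕ | 1 ≤ k ∧ k ≤ n ∧ (cyl n a ∩ shift^[k] ⁻¹' cyl n a).Nonempty}).Nonempty := by
    refine ⟨n, hn, le_refl n, ⟨(fun i => a (i % n)), ?_, ?_⟩⟩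
    · intro i hi
      simp [Nat.mod_eq_of_lt hi]
    · intro i hi
      show (shift^[n] (fun i => a (i % n))) i = a i
      rw [shift_iterate]
      simp [Nat.add_mod_right, Nat.mod_eq_of_lt hi]
  set r : ℕ := piCyl n a with hrdef
  have hrmem : 1 ≤ r ∧ r ≤ n ∧ (cyl n a ∩ shift^[r] ⁻¹' cyl n a).Nonempty := by
    rw [hrdef, piCyl]
    exact Nat.sInf_mem hSne
  obtain ⟨hr1, hrn, ω₀, hω₀1, hω₀2⟩ := hrmem
  have hper : ∀ i, i + r < n → a (i + r) = a i := by
    intro i h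
    have h1 : ω₀ (i + r) = a (i + r) := hω₀1 (i + r) h
    have h2 : (shift^[r] ω₀) i = a i := hω₀2 i (by omega)
    rw [shift_iterate] at h2
    rw [← h1]
    exact h2
  have aper : ∀ i, i < n → a (i % r) = a i := by
    intro i
    induction i using Nat.strong_induction_on with
    | _ i ih =>
      intro hi
      by_cases hir : i < r
      · rw [Nat.mod_eq_of_lt hir]
      · push_neg at hir
        have h1 : a ((i - r) % r) = a (i - r) := ih (i - r) (by omega) (by omega)
        rw [Nat.mod_eq_sub_mod hir, h1]
        have h2 := hper (i - r) (by omega)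
        rw [Nat.sub_add_cancel hir] at h2
        exact h2.symm
  have hbp : ∀ i, (per r a) (i + r) = (per r a) i := by
    intro i
    show a ((i + r) % r) = a (i % r)
    rw [Nat.add_mod_right]
  have hcyl_ab : cyl n a = cyl n (per r a) := by
    ext ω
    constructor
    · intro h i hi
      show ω i = a (i % r)
      rw [aper i hi]
      exact h i hi
    · intro h i hi
      have h1 : ω i = a (i % r) := h i hi
      rw [aper i hi] at h1
      exact h1
  have hq0 : μ (cyl n (per r a)) ≠ 0 := by rw [← hcyl_ab]; exact ha
  have hcore := core_ratio μ hinv hmix.1 ε hε m₀ hψ hsym (fun z => (hpos z).ne')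
    (per r a) r n hr1 hn hbp hq0
  -- bound rho by the single factor i₀ and then by the one-period extension
  have hq0' : 0 < (μ (cyl n a)).toReal := ENNReal.toReal_pos ha (measure_ne_top _ _)
  have hsub : ∀ s : ℕ, cyl (n + s) (per r a) ∩ cyl n a = cyl (n + s) (per r a) := by
    intro s
    apply Set.inter_eq_left.mpr
    rw [hcyl_ab]
    intro ω hω i hi
    exact hω i (by omega)
  have hfactor : ∀ i : Fin ℓ,
      (μ (cyl (n + d i * kap ℓ d r) (per r a) ∩ cyl n a)).toReal / (μ (cyl n a)).toReal
        ≤ 1 := by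
    intro i
    rw [hsub]
    apply (div_le_one hq0').mpr
    apply ENNReal.toReal_mono (measure_ne_top _ _)
    apply measure_mono
    rw [hcyl_ab]
    intro ω hω i' hi'
    exact hω i' (by omega)
  have hfnn : ∀ i : Fin ℓ,
      0 ≤ (μ (cyl (n + d i * kap ℓ d r) (per r a) ∩ cyl n a)).toReal / (μ (cyl n a)).toReal :=
    fun i => div_nonneg ENNReal.toReal_nonneg ENNReal.toReal_nonneg
  set i₀ : Fin ℓ := ⟨0, hl⟩ with hi₀
  -- r ≤ d i₀ * kap ℓ d r
  have hkpos : 0 < kap ℓ d r := by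
    rcases Nat.eq_zero_or_pos (kap ℓ d r) with h0 | h
    · exfalso
      rw [kap, Finset.lcm_eq_zero_iff] at h0
      obtain ⟨i, -, hi⟩ := h0
      have hi' : r / Nat.gcd r (d i) = 0 := hi
      have h2 : 0 < r / Nat.gcd r (d i) :=
        Nat.div_pos (Nat.le_of_dvd hr1 (Nat.gcd_dvd_left _ _))
          (Nat.gcd_pos_of_pos_left _ hr1)
      omega
    · exact h
  have hs₀ : r ≤ d i₀ * kap ℓ d r := by
    have h1 : r / Nat.gcd r (d i₀) ≤ kap ℓ d r :=
      Nat.le_of_dvd hkpos (Finset.dvd_lcm (Finset.mem_univ i₀))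
    have h2 : Nat.gcd r (d i₀) ≤ d i₀ := Nat.le_of_dvd (hd1 i₀) (Nat.gcd_dvd_right _ _)
    calc r = Nat.gcd r (d i₀) * (r / Nat.gcd r (d i₀)) :=
          (Nat.mul_div_cancel' (Nat.gcd_dvd_left _ _)).symm
      _ ≤ d i₀ * kap ℓ d r := Nat.mul_le_mul h2 h1
  have hrho_eq : rho μ ℓ d n a = ∏ i : Fin ℓ,
      ((μ (cyl (n + d i * kap ℓ d r) (per r a) ∩ cyl n a)).toReal /
        (μ (cyl n a)).toReal) := by
    rw [hrdef]
    rfl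
  have hrho_le : rho μ ℓ d n a
      ≤ (μ (cyl (n + d i₀ * kap ℓ d r) (per r a) ∩ cyl n a)).toReal /
        (μ (cyl n a)).toReal := by
    rw [hrho_eq]
    calc ∏ i : Fin ℓ,
          ((μ (cyl (n + d i * kap ℓ d r) (per r a) ∩ cyl n a)).toReal /
            (μ (cyl n a)).toReal)
        = ((μ (cyl (n + d i₀ * kap ℓ d r) (per r a) ∩ cyl n a)).toReal /
            (μ (cyl n a)).toReal) *
          ∏ i ∈ Finset.univ.erase i₀,
            ((μ (cyl (n + d i * kap ℓ d r) (per r a) ∩ cyl n a)).toReal /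
              (μ (cyl n a)).toReal) :=
          (Finset.mul_prod_erase Finset.univ _ (Finset.mem_univ i₀)).symm
      _ ≤ ((μ (cyl (n + d i₀ * kap ℓ d r) (per r a) ∩ cyl n a)).toReal /
            (μ (cyl n a)).toReal) * 1 := by
          apply mul_le_mul_of_nonneg_left _ (hfnn i₀)
          exact Finset.prod_le_one (fun i _ => hfnn i) (fun i _ => hfactor i)
      _ = _ := mul_one _
  have hnum : (μ (cyl (n + d i₀ * kap ℓ d r) (per r a) ∩ cyl n a)).toReal
      ≤ (μ (cyl (n + r) (per r a))).toReal := by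
    rw [hsub]
    apply ENNReal.toReal_mono (measure_ne_top _ _)
    apply measure_mono
    intro ω hω i hi
    exact hω i (lt_of_lt_of_le hi (Nat.add_le_add_left hs₀ n))
  have hTn : (μ (cyl n a)).toReal = (μ (cyl n (per r a))).toReal := by rw [hcyl_ab]
  calc rho μ ℓ d n a
      ≤ (μ (cyl (n + d i₀ * kap ℓ d r) (per r a) ∩ cyl n a)).toReal /
        (μ (cyl n a)).toReal := hrho_le
    _ ≤ (μ (cyl (n + r) (per r a))).toReal / (μ (cyl n a)).toReal :=
        (div_le_div_iff_of_pos_right hq0').mpr hnum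
    _ ≤ 1 - (1 - (1 + ε / 2) * (1 - ε)) / (m₀ + 1 : ℝ) := by
        rw [hTn]
        rw [div_le_iff₀ (hTn ▸ hq0')]
        exact hcore

end Nonconv
end

section
/- Let 𝒜 = {0,1}, Ω = {0,1}^ℕ, and let ℙ be the product measure under which the coordinates are i.i.d. with ℙ{ω_0 = 0} = p_0 and ℙ{ω_0 = 1} = p_1, where p_0, p_1 > 0 and p_0 + p_1 = 1. Define S : Ω → Ω by (Sω)_n = ω_n + ω_{n+1} (mod 2), and let ℙ_0 = ℙ ∘ S^{−1} be the pushforward measure. Then: (a) ℙ_0 is invariant under the left shift T; (b) the ψ-mixing coefficients of ℙ_0 satisfy ψ_l(ℙ_0) = 0 for every l ≥ 1 and ψ_0(ℙ_0) ≤ 1 + 2(p_0^{−1} + p_1^{−1}) < ∞. -/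
open MeasureTheory Filter Set ProbabilityTheory
open scoped ENNReal

namespace Nonconv

variable {𝒜 : Type*} [MeasurableSpace 𝒜]

/-- The mod-2 pair-sum map `(Sω)_n = ω_n + ω_{n+1} (mod 2)` on `{0,1}^ℕ`, with the
digits `0,1` encoded as booleans (`false = 0`, `true = 1`), so that mod-2 addition
is `xor`. -/
def pairSum : (ℕ → Bool) → ℕ → Bool := fun ω n => xor (ω n) (ω (n + 1))

section Aux18

/-- Weight of a digit. -/
noncomputable def W (p0 p1 : ℝ) : Bool → ℝ≥0∞ := fun b => ENNReal.ofReal (if b then p1 else p0)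

/-- Finite point-cylinder events. -/
def pev (s : Finset ℕ) (f : ℕ → Bool) : Set (ℕ → Bool) := {ω | ∀ i ∈ s, ω i = f i}

/-- π-system of point-cylinder events supported in `I`. -/
def piSys (I : Set ℕ) : Set (Set (ℕ → Bool)) :=
  {B | ∃ s : Finset ℕ, ∃ f : ℕ → Bool, ↑s ⊆ I ∧ B = pev s f}

lemma pev_eq_iInter (s : Finset ℕ) (f : ℕ → Bool) :
    pev s f = ⋂ i ∈ s, (fun ω : ℕ → Bool => ω i) ⁻¹' {f i} := by
  ext ω; simp [pev]

lemma measurableSet_pev (s : Finset ℕ) (f : ℕ → Bool) : MeasurableSet (pev s f) := by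
  rw [pev_eq_iInter]
  exact MeasurableSet.biInter s.countable_toSet fun i _ =>
    measurable_pi_apply i (measurableSet_singleton _)

lemma measurable_eval_coordSigma {I : Set ℕ} {i : ℕ} (hi : i ∈ I) :
    Measurable[coordSigma (𝒜 := Bool) I] (fun ω : ℕ → Bool => ω i) :=
  measurable_iff_comap_le.2 <| le_iSup₂ (f := fun (i : ℕ) (_ : i ∈ I) =>
    MeasurableSpace.comap (fun ω : ℕ → Bool => ω i) inferInstance) i hi

lemma isPiSystem_piSys (I : Set ℕ) : IsPiSystem (piSys I) := by
  rintro B ⟨s, f, hs, rfl⟩ C ⟨t, g, ht, rfl⟩ ⟨ω, hωs, hωt⟩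
  refine ⟨s ∪ t, fun i => if i ∈ s then f i else g i, ?_, ?_⟩
  · rw [Finset.coe_union]; exact Set.union_subset hs ht
  · ext ω'
    simp only [pev, Set.mem_inter_iff, Set.mem_setOf_eq, Finset.mem_union]
    constructor
    · rintro ⟨h1, h2⟩ i hi
      rcases hi with hi | hi
      · rw [if_pos hi]; exact h1 i hi
      · by_cases h' : i ∈ s
        · rw [if_pos h']; exact h1 i h'
        · rw [if_neg h']; exact h2 i hi
    · intro h
      constructor
      · intro i hi
        have := h i (Or.inl hi); rwa [if_pos hi] at this
      · intro i hi
        have := h i (Or.inr hi)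
        by_cases h' : i ∈ s
        · rw [if_pos h'] at this
          rw [this, ← hωs i h']; exact hωt i hi
        · rwa [if_neg h'] at this

lemma coordSigma_le_pi (I : Set ℕ) :
    coordSigma (𝒜 := 𝒜) I ≤ (inferInstance : MeasurableSpace (ℕ → 𝒜)) :=
  iSup₂_le fun i _ => (measurable_pi_apply i).comap_le

lemma coordSigma_eq_generateFrom (I : Set ℕ) :
    coordSigma (𝒜 := Bool) I = MeasurableSpace.generateFrom (piSys I) := by
  refine le_antisymm (iSup₂_le fun i hi => ?_) (MeasurableSpace.generateFrom_le ?_)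
  · rw [← measurable_iff_comap_le]
    refine @measurable_to_countable' Bool (ℕ → Bool) _ _
      (MeasurableSpace.generateFrom (piSys I)) _ fun b => ?_
    have h : (fun ω : ℕ → Bool => ω i) ⁻¹' {b} = pev {i} (fun _ => b) := by
      ext ω; simp [pev]
    rw [h]
    exact MeasurableSpace.measurableSet_generateFrom ⟨{i}, fun _ => b, by simpa using hi, rfl⟩
  · rintro B ⟨s, f, hs, rfl⟩
    rw [pev_eq_iInter]
    exact MeasurableSet.biInter s.countable_toSet fun i hi =>
      measurable_eval_coordSigma (hs hi) (measurableSet_singleton _)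

variable {p0 p1 : ℝ}

lemma meas_pev_aux (hp0 : 0 ≤ p0) (hp1 : 0 ≤ p1) (hsum : p0 + p1 = 1)
    (μ : Measure (ℕ → Bool))
    (hprod : ∀ (m : ℕ) (a : ℕ → Bool), μ (cyl m a) = ∏ i ∈ Finset.range m, W p0 p1 (a i)) :
    ∀ (k N : ℕ) (s : Finset ℕ) (f : ℕ → Bool), s ⊆ Finset.range N →
      (Finset.range N \ s).card = k → μ (pev s f) = ∏ i ∈ s, W p0 p1 (f i) := by
  intro k
  induction k with
  | zero =>
    intro N s f hsub hcard
    have hs : s = Finset.range N := by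
      refine Finset.Subset.antisymm hsub ?_
      rwa [Finset.card_eq_zero, Finset.sdiff_eq_empty_iff_subset] at hcard
    subst hs
    have h : pev (Finset.range N) f = cyl N f := by
      ext ω; simp [pev, cyl]
    rw [h, hprod]
  | succ k ih =>
    intro N s f hsub hcard
    obtain ⟨j, hj⟩ : (Finset.range N \ s).Nonempty := by
      rw [← Finset.card_pos, hcard]; omega
    have hjs : j ∉ s := (Finset.mem_sdiff.1 hj).2
    have hne : ∀ i ∈ s, i ≠ j := fun i hi he => hjs (he ▸ hi)
    have hkey : pev s f =
        pev (insert j s) (Function.update f j false) ∪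
          pev (insert j s) (Function.update f j true) := by
      ext ω
      simp only [pev, Set.mem_union, Set.mem_setOf_eq]
      constructor
      · intro h
        cases hb : ω j with
        | false =>
          left
          intro i hi
          rcases Finset.mem_insert.1 hi with rfl | hi
          · rw [Function.update_self]; exact hb
          · rw [Function.update_of_ne (hne i hi) _ _]; exact h i hi
        | true =>
          right
          intro i hi
          rcases Finset.mem_insert.1 hi with rfl | hi
          · rw [Function.update_self]; exact hb
          · rw [Function.update_of_ne (hne i hi) _ _]; exact h i hi
      · rintro (h | h) i hi
        · have := h i (Finset.mem_insert_of_mem hi)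
          rwa [Function.update_of_ne (hne i hi) _ _] at this
        · have := h i (Finset.mem_insert_of_mem hi)
          rwa [Function.update_of_ne (hne i hi) _ _] at this
    have hdisj : Disjoint (pev (insert j s) (Function.update f j false))
        (pev (insert j s) (Function.update f j true)) := by
      rw [Set.disjoint_left]
      intro ω h1 h2
      have e1 := h1 j (Finset.mem_insert_self j s)
      have e2 := h2 j (Finset.mem_insert_self j s)
      rw [Function.update_self] at e1 e2
      rw [e1] at e2
      exact Bool.false_ne_true e2
    have hsub' : insert j s ⊆ Finset.range N :=
      Finset.insert_subset (Finset.mem_sdiff.1 hj).1 hsub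
    have hcard' : (Finset.range N \ insert j s).card = k := by
      have h1 := Finset.card_sdiff_of_subset hsub
      have h2 := Finset.card_sdiff_of_subset hsub'
      rw [Finset.card_insert_of_notMem hjs] at h2
      omega
    rw [hkey, measure_union hdisj (measurableSet_pev _ _), ih N _ _ hsub' hcard',
      ih N _ _ hsub' hcard', Finset.prod_insert hjs, Finset.prod_insert hjs]
    have hupd : ∀ b : Bool,
        ∏ i ∈ s, W p0 p1 (Function.update f j b i) = ∏ i ∈ s, W p0 p1 (f i) := fun b =>
      Finset.prod_congr rfl fun i hi => by rw [Function.update_of_ne (hne i hi) _ _]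
    rw [hupd, hupd, Function.update_self, Function.update_self, ← add_mul]
    have hone : W p0 p1 false + W p0 p1 true = 1 := by
      simp only [W, Bool.false_eq_true, if_false, if_true]
      rw [← ENNReal.ofReal_add hp0 hp1, hsum, ENNReal.ofReal_one]
    rw [hone, one_mul]

lemma meas_pev (hp0 : 0 ≤ p0) (hp1 : 0 ≤ p1) (hsum : p0 + p1 = 1)
    (μ : Measure (ℕ → Bool))
    (hprod : ∀ (m : ℕ) (a : ℕ → Bool), μ (cyl m a) = ∏ i ∈ Finset.range m, W p0 p1 (a i))
    (s : Finset ℕ) (f : ℕ → Bool) : μ (pev s f) = ∏ i ∈ s, W p0 p1 (f i) := by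
  obtain ⟨N, hN⟩ := s.exists_nat_subset_range
  exact meas_pev_aux hp0 hp1 hsum μ hprod _ N s f hN rfl

lemma meas_inter_coordSigma (hp0 : 0 ≤ p0) (hp1 : 0 ≤ p1) (hsum : p0 + p1 = 1)
    (μ : Measure (ℕ → Bool)) [IsProbabilityMeasure μ]
    (hprod : ∀ (m : ℕ) (a : ℕ → Bool), μ (cyl m a) = ∏ i ∈ Finset.range m, W p0 p1 (a i))
    {J K : Set ℕ} (hJK : Disjoint J K) {B C : Set (ℕ → Bool)}
    (hB : MeasurableSet[coordSigma J] B) (hC : MeasurableSet[coordSigma K] C) :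
    μ (B ∩ C) = μ B * μ C := by
  have hindep : ProbabilityTheory.Indep (coordSigma J) (coordSigma K) μ := by
    refine ProbabilityTheory.IndepSets.indep (coordSigma_le_pi J) (coordSigma_le_pi K)
      (isPiSystem_piSys J) (isPiSystem_piSys K) (coordSigma_eq_generateFrom J)
      (coordSigma_eq_generateFrom K) ?_
    rw [ProbabilityTheory.IndepSets_iff]
    rintro B C ⟨s, f, hs, rfl⟩ ⟨t, g, ht, rfl⟩
    have hst : Disjoint s t := by
      rw [Finset.disjoint_left]
      intro i his hit
      exact Set.disjoint_left.1 hJK (hs his) (ht hit)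
    have hint : pev s f ∩ pev t g =
        pev (s ∪ t) (fun i => if i ∈ s then f i else g i) := by
      ext ω
      simp only [pev, Set.mem_inter_iff, Set.mem_setOf_eq, Finset.mem_union]
      constructor
      · rintro ⟨h1, h2⟩ i hi
        rcases hi with hi | hi
        · rw [if_pos hi]; exact h1 i hi
        · rw [if_neg (Finset.disjoint_right.1 hst hi)]; exact h2 i hi
      · intro h
        constructor
        · intro i hi
          have := h i (Or.inl hi)
          rwa [if_pos hi] at this
        · intro i hi
          have := h i (Or.inr hi)
          rwa [if_neg (Finset.disjoint_right.1 hst hi)] at this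
    rw [hint, meas_pev hp0 hp1 hsum μ hprod, meas_pev hp0 hp1 hsum μ hprod,
      meas_pev hp0 hp1 hsum μ hprod, Finset.prod_union hst]
    congr 1
    · exact Finset.prod_congr rfl fun i hi => by rw [if_pos hi]
    · exact Finset.prod_congr rfl fun i hi => by
        rw [if_neg (Finset.disjoint_right.1 hst hi)]
  exact (ProbabilityTheory.Indep_iff _ _ _).1 hindep B C hB hC

lemma measurable_shift : Measurable (shift : (ℕ → 𝒜) → ℕ → 𝒜) :=
  measurable_pi_iff.2 fun i => measurable_pi_apply (i + 1)

lemma pi_eq_generateFrom :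
    (inferInstance : MeasurableSpace (ℕ → Bool)) =
      MeasurableSpace.generateFrom (piSys Set.univ) := by
  rw [← coordSigma_eq_generateFrom]
  refine le_antisymm ?_ (coordSigma_le_pi _)
  exact iSup_le fun i => le_iSup₂ (f := fun (i : ℕ) (_ : i ∈ Set.univ) =>
    MeasurableSpace.comap (fun ω : ℕ → Bool => ω i) inferInstance) i (Set.mem_univ i)

lemma map_shift_eq (hp0 : 0 ≤ p0) (hp1 : 0 ≤ p1) (hsum : p0 + p1 = 1)
    (μ : Measure (ℕ → Bool)) [IsProbabilityMeasure μ]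
    (hprod : ∀ (m : ℕ) (a : ℕ → Bool), μ (cyl m a) = ∏ i ∈ Finset.range m, W p0 p1 (a i)) :
    Measure.map shift μ = μ := by
  refine MeasureTheory.ext_of_generate_finite (piSys Set.univ) pi_eq_generateFrom
    (isPiSystem_piSys _) ?_ ?_
  · rintro B ⟨s, f, hs, rfl⟩
    rw [Measure.map_apply measurable_shift (measurableSet_pev s f)]
    have hpre : shift ⁻¹' pev s f = pev (s.image (· + 1)) (fun i => f (i - 1)) := by
      ext ω
      simp only [pev, Set.mem_preimage, Set.mem_setOf_eq, Finset.mem_image, shift]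
      constructor
      · rintro h i ⟨i', hi', rfl⟩
        simpa using h i' hi'
      · intro h i hi
        have := h (i + 1) ⟨i, hi, rfl⟩
        simpa using this
    rw [hpre, meas_pev hp0 hp1 hsum μ hprod, meas_pev hp0 hp1 hsum μ hprod,
      Finset.prod_image (fun a _ b _ h => by omega)]
    exact Finset.prod_congr rfl fun i _ => by simp
  · rw [Measure.map_apply measurable_shift MeasurableSet.univ]
    simp

lemma measurable_pairSum : Measurable pairSum := by
  refine measurable_pi_iff.2 fun n => ?_
  have h : (fun ω : ℕ → Bool => pairSum ω n) =
      (fun p : Bool × Bool => xor p.1 p.2) ∘ (fun ω : ℕ → Bool => (ω n, ω (n + 1))) := rfl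
  rw [h]
  exact (measurable_of_countable _).comp
    ((measurable_pi_apply n).prodMk (measurable_pi_apply (n + 1)))

lemma measurable_pairSum_coordSigma {I J : Set ℕ} (h : ∀ i ∈ I, i ∈ J ∧ i + 1 ∈ J) :
    @Measurable _ _ (coordSigma J) (coordSigma I) pairSum := by
  rw [measurable_iff_comap_le]
  have he : coordSigma (𝒜 := Bool) I = ⨆ i ∈ I,
      MeasurableSpace.comap (fun ω : ℕ → Bool => ω i) inferInstance := rfl
  rw [he, MeasurableSpace.comap_iSup]
  refine iSup_le fun i => ?_
  rw [MeasurableSpace.comap_iSup]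
  refine iSup_le fun hi => ?_
  rw [MeasurableSpace.comap_comp, ← measurable_iff_comap_le]
  have h2 : ((fun ω : ℕ → Bool => ω i) ∘ pairSum) =
      (fun p : Bool × Bool => xor p.1 p.2) ∘ (fun ω : ℕ → Bool => (ω i, ω (i + 1))) := rfl
  rw [h2]
  exact (measurable_of_countable _).comp
    ((measurable_eval_coordSigma (h i hi).1).prodMk (measurable_eval_coordSigma (h i hi).2))

lemma measurable_update_coordSigma (n : ℕ) (b : Bool) :
    @Measurable _ _ (coordSigma {i : ℕ | i ≤ n}) (coordSigma {i : ℕ | i ≤ n + 1})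
      (fun ω : ℕ → Bool => Function.update ω (n + 1) b) := by
  rw [measurable_iff_comap_le]
  have he : coordSigma (𝒜 := Bool) {i : ℕ | i ≤ n + 1} = ⨆ i ∈ {i : ℕ | i ≤ n + 1},
      MeasurableSpace.comap (fun ω : ℕ → Bool => ω i) inferInstance := rfl
  rw [he, MeasurableSpace.comap_iSup]
  refine iSup_le fun i => ?_
  rw [MeasurableSpace.comap_iSup]
  refine iSup_le fun hi => ?_
  rw [MeasurableSpace.comap_comp, ← measurable_iff_comap_le]
  have hi' : i ≤ n + 1 := hi
  by_cases hin : i = n + 1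
  · subst hin
    have h : ((fun ω : ℕ → Bool => ω (n + 1)) ∘ fun ω => Function.update ω (n + 1) b) =
        fun _ => b := by
      funext ω; simp [Function.update_self]
    rw [h]; exact measurable_const
  · have h : ((fun ω : ℕ → Bool => ω i) ∘ fun ω => Function.update ω (n + 1) b) =
        fun ω : ℕ → Bool => ω i := by
      funext ω; simp [Function.update_of_ne hin]
    rw [h]
    exact measurable_eval_coordSigma (show i ∈ {i : ℕ | i ≤ n} from by
      simp only [Set.mem_setOf_eq]; omega)

lemma key_bound (hp0 : 0 < p0) (hp1 : 0 < p1) (hsum : p0 + p1 = 1)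
    (μ : Measure (ℕ → Bool)) [IsProbabilityMeasure μ]
    (hprod : ∀ (m : ℕ) (a : ℕ → Bool), μ (cyl m a) = ∏ i ∈ Finset.range m, W p0 p1 (a i))
    (n : ℕ) {B C : Set (ℕ → Bool)}
    (hB : MeasurableSet[coordSigma {i : ℕ | i ≤ n + 1}] B)
    (hC : MeasurableSet[coordSigma {i : ℕ | n + 1 ≤ i}] C) :
    μ (B ∩ C) ≤ ((W p0 p1 false)⁻¹ + (W p0 p1 true)⁻¹) * (μ B * μ C) := by
  set c : ℝ≥0∞ := (W p0 p1 false)⁻¹ + (W p0 p1 true)⁻¹ with hc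
  have hw0 : ∀ b, W p0 p1 b ≠ 0 := by
    intro b
    cases b
    · simpa [W] using (ENNReal.ofReal_pos.2 hp0).ne'
    · simpa [W] using (ENNReal.ofReal_pos.2 hp1).ne'
  have hwt : ∀ b, W p0 p1 b ≠ ⊤ := fun b => ENNReal.ofReal_ne_top
  set D : Bool → Set (ℕ → Bool) := fun b => pev {n + 1} (fun _ => b) with hD
  have hDK : ∀ b, MeasurableSet[coordSigma {i : ℕ | n + 1 ≤ i}] (D b) := by
    intro b
    rw [coordSigma_eq_generateFrom]
    exact MeasurableSpace.measurableSet_generateFrom ⟨{n + 1}, fun _ => b, by simp, rfl⟩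
  have hμD : ∀ b, μ (D b) = W p0 p1 b := by
    intro b
    rw [hD, meas_pev hp0.le hp1.le hsum μ hprod, Finset.prod_singleton]
  set B2 : Bool → Set (ℕ → Bool) := fun b => (fun ω => Function.update ω (n + 1) b) ⁻¹' B
    with hB2
  have hB2m : ∀ b, MeasurableSet[coordSigma {i : ℕ | i ≤ n}] (B2 b) := fun b =>
    measurable_update_coordSigma n b hB
  have hJK : Disjoint {i : ℕ | i ≤ n} {i : ℕ | n + 1 ≤ i} := by
    rw [Set.disjoint_left]
    intro i h1 h2
    simp only [Set.mem_setOf_eq] at h1 h2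
    omega
  have hEq : ∀ b, B ∩ D b = B2 b ∩ D b := by
    intro b; ext ω
    simp only [hB2, hD, pev, Set.mem_inter_iff, Set.mem_preimage, Set.mem_setOf_eq,
      Finset.mem_singleton]
    constructor
    · rintro ⟨h1, h2⟩
      refine ⟨?_, h2⟩
      have h2' : ω (n + 1) = b := h2 _ rfl
      rwa [← h2', Function.update_eq_self]
    · rintro ⟨h1, h2⟩
      refine ⟨?_, h2⟩
      have h2' : ω (n + 1) = b := h2 _ rfl
      rwa [← h2', Function.update_eq_self] at h1
  have hmeasK : ∀ b, MeasurableSet[coordSigma {i : ℕ | n + 1 ≤ i}] (C ∩ D b) := fun b =>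
    hC.inter (hDK b)
  have hBCD : ∀ b, μ (B ∩ C ∩ D b) = μ (B2 b) * μ (C ∩ D b) := by
    intro b
    have h1 : B ∩ C ∩ D b = B2 b ∩ (C ∩ D b) := by
      rw [Set.inter_comm B C, Set.inter_assoc, hEq b, ← Set.inter_assoc,
        Set.inter_comm C (B2 b), Set.inter_assoc]
    rw [h1]
    exact meas_inter_coordSigma hp0.le hp1.le hsum μ hprod hJK (hB2m b) (hmeasK b)
  have hBD : ∀ b, μ (B2 b) * W p0 p1 b ≤ μ B := by
    intro b
    have h := meas_inter_coordSigma hp0.le hp1.le hsum μ hprod hJK (hB2m b) (hDK b)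
    rw [hμD b] at h
    rw [← h, ← hEq b]
    exact measure_mono Set.inter_subset_left
  have hB2le : ∀ b, μ (B2 b) ≤ (W p0 p1 b)⁻¹ * μ B := by
    intro b
    rw [← ENNReal.div_eq_inv_mul]
    exact (ENNReal.le_div_iff_mul_le (Or.inl (hw0 b)) (Or.inl (hwt b))).2 (hBD b)
  have hsplit : ∀ X : Set (ℕ → Bool), μ X = μ (X ∩ D false) + μ (X ∩ D true) := by
    intro X
    have hm : MeasurableSet (D false) := measurableSet_pev _ _
    have hdiff : X \ D false = X ∩ D true := by
      ext ω
      simp [hD, pev]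
    rw [← measure_inter_add_diff X hm, hdiff]
  have hterm : ∀ b, μ (B ∩ C ∩ D b) ≤ c * μ B * μ (C ∩ D b) := by
    intro b
    rw [hBCD b]
    calc μ (B2 b) * μ (C ∩ D b) ≤ (W p0 p1 b)⁻¹ * μ B * μ (C ∩ D b) :=
          mul_le_mul_left (hB2le b) _
    _ ≤ c * μ B * μ (C ∩ D b) := by
        refine mul_le_mul_left (mul_le_mul_left ?_ _) _
        cases b
        · exact self_le_add_right _ _
        · exact le_add_self
  calc μ (B ∩ C) = μ (B ∩ C ∩ D false) + μ (B ∩ C ∩ D true) := hsplit _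
  _ ≤ c * μ B * μ (C ∩ D false) + c * μ B * μ (C ∩ D true) :=
      add_le_add (hterm false) (hterm true)
  _ = c * (μ B * μ C) := by
      rw [mul_assoc, mul_assoc, ← mul_add, ← mul_add, ← hsplit C]

end Aux18

/-- Section 7: the pushforward `ℙ₀ = ℙ ∘ S⁻¹` of the Bernoulli
`(p₀,p₁)` measure under the mod-2 pair-sum map `S` is shift invariant, has
`ψ_l(ℙ₀) = 0` for all `l ≥ 1`, and `ψ_0(ℙ₀) ≤ 1 + 2(p₀⁻¹ + p₁⁻¹) < ∞`. -/
theorem pairSum_pushforward_shift_invariant_psi_mixing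
    (p0 p1 : ℝ) (hp0 : 0 < p0) (hp1 : 0 < p1) (hsum : p0 + p1 = 1)
    (μ : Measure (ℕ → Bool)) [IsProbabilityMeasure μ]
    (hprod : ∀ (m : ℕ) (a : ℕ → Bool),
      μ (cyl m a) = ∏ i ∈ Finset.range m, ENNReal.ofReal (if a i then p1 else p0)) :
    Measure.map shift (Measure.map pairSum μ) = Measure.map pairSum μ ∧
    (∀ l : ℕ, 1 ≤ l → psiMix (Measure.map pairSum μ) l = 0) ∧
    (∀ x ∈ psiMixSet (Measure.map pairSum μ) 0, x ≤ 1 + 2 * (p0⁻¹ + p1⁻¹)) := by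
  have hps : Measurable pairSum := measurable_pairSum
  have hsh : Measurable (shift : (ℕ → Bool) → ℕ → Bool) := measurable_shift
  have hprod' : ∀ (m : ℕ) (a : ℕ → Bool),
      μ (cyl m a) = ∏ i ∈ Finset.range m, W p0 p1 (a i) := hprod
  set ν := Measure.map pairSum μ with hν
  haveI hνprob : IsProbabilityMeasure ν := Measure.isProbabilityMeasure_map hps.aemeasurable
  refine ⟨?_, ?_, ?_⟩
  · -- shift invariance
    rw [hν, Measure.map_map hsh hps]
    have hcomm : (shift ∘ pairSum : (ℕ → Bool) → ℕ → Bool) = pairSum ∘ shift := rfl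
    rw [hcomm, ← Measure.map_map hps hsh, map_shift_eq hp0.le hp1.le hsum μ hprod']
  · -- psiMix = 0 for l ≥ 1
    intro l hl
    have hset : psiMixSet ν l = {0} := by
      refine Set.Subset.antisymm ?_ ?_
      · intro x hx
        obtain ⟨n, hx⟩ := Set.mem_iUnion.1 hx
        obtain ⟨B, C, hB, hC, hB0, hC0, rfl⟩ := hx
        have hBm : MeasurableSet B := coordSigma_le_pi _ _ hB
        have hCm : MeasurableSet C := coordSigma_le_pi _ _ hC
        have hpreB : MeasurableSet[coordSigma {i : ℕ | i ≤ n + 1}] (pairSum ⁻¹' B) :=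
          measurable_pairSum_coordSigma (I := {i : ℕ | i ≤ n}) (J := {i : ℕ | i ≤ n + 1})
            (fun i hi => ⟨Nat.le_succ_of_le hi, Nat.succ_le_succ hi⟩) hB
        have hpreC : MeasurableSet[coordSigma {i : ℕ | n + l + 1 ≤ i}] (pairSum ⁻¹' C) :=
          measurable_pairSum_coordSigma (I := {i : ℕ | n + l + 1 ≤ i})
            (J := {i : ℕ | n + l + 1 ≤ i})
            (fun i hi => ⟨hi, by
              have h' : n + l + 1 ≤ i := hi
              show n + l + 1 ≤ i + 1
              omega⟩) hC
        have hdisj : Disjoint {i : ℕ | i ≤ n + 1} {i : ℕ | n + l + 1 ≤ i} := by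
          rw [Set.disjoint_left]
          intro i h1 h2
          simp only [Set.mem_setOf_eq] at h1 h2
          omega
        have hBC : ν (B ∩ C) = ν B * ν C := by
          rw [hν, Measure.map_apply hps (hBm.inter hCm), Measure.map_apply hps hBm,
            Measure.map_apply hps hCm, Set.preimage_inter]
          exact meas_inter_coordSigma hp0.le hp1.le hsum μ hprod' hdisj hpreB hpreC
        have hBfin : ν B ≠ ⊤ := measure_ne_top ν B
        have hCfin : ν C ≠ ⊤ := measure_ne_top ν C
        simp only [Set.mem_singleton_iff]
        rw [hBC, ENNReal.toReal_mul, div_self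
          (mul_ne_zero (ENNReal.toReal_ne_zero.2 ⟨hB0, hBfin⟩)
            (ENNReal.toReal_ne_zero.2 ⟨hC0, hCfin⟩)), sub_self, abs_zero]
      · intro x hx
        rw [Set.mem_singleton_iff] at hx
        subst hx
        refine Set.mem_iUnion.2 ⟨0, Set.univ, Set.univ, MeasurableSet.univ,
          MeasurableSet.univ, ?_, ?_, ?_⟩
        · simp
        · simp
        · simp
    rw [psiMix, hset, csSup_singleton]
  · -- the ψ₀ bound
    intro x hx
    obtain ⟨n, hx⟩ := Set.mem_iUnion.1 hx
    obtain ⟨B, C, hB, hC, hB0, hC0, rfl⟩ := hx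
    have hBm : MeasurableSet B := coordSigma_le_pi _ _ hB
    have hCm : MeasurableSet C := coordSigma_le_pi _ _ hC
    have hC' : MeasurableSet[coordSigma {i : ℕ | n + 1 ≤ i}] C := hC
    have hpreB : MeasurableSet[coordSigma {i : ℕ | i ≤ n + 1}] (pairSum ⁻¹' B) :=
      measurable_pairSum_coordSigma (I := {i : ℕ | i ≤ n}) (J := {i : ℕ | i ≤ n + 1})
        (fun i hi => ⟨Nat.le_succ_of_le hi, Nat.succ_le_succ hi⟩) hB
    have hpreC : MeasurableSet[coordSigma {i : ℕ | n + 1 ≤ i}] (pairSum ⁻¹' C) :=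
      measurable_pairSum_coordSigma (I := {i : ℕ | n + 1 ≤ i}) (J := {i : ℕ | n + 1 ≤ i})
        (fun i hi => ⟨hi, by
          have h' : n + 1 ≤ i := hi
          show n + 1 ≤ i + 1
          omega⟩) hC'
    have hkey := key_bound hp0 hp1 hsum μ hprod' n hpreB hpreC
    set c : ℝ≥0∞ := (W p0 p1 false)⁻¹ + (W p0 p1 true)⁻¹ with hc
    have hw0f : W p0 p1 false ≠ 0 := by
      simpa [W] using (ENNReal.ofReal_pos.2 hp0).ne'
    have hw0t : W p0 p1 true ≠ 0 := by
      simpa [W] using (ENNReal.ofReal_pos.2 hp1).ne'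
    have hcfin : c ≠ ⊤ :=
      ENNReal.add_ne_top.2 ⟨ENNReal.inv_ne_top.2 hw0f, ENNReal.inv_ne_top.2 hw0t⟩
    have hctoReal : c.toReal = p0⁻¹ + p1⁻¹ := by
      rw [hc, ENNReal.toReal_add (ENNReal.inv_ne_top.2 hw0f) (ENNReal.inv_ne_top.2 hw0t),
        ENNReal.toReal_inv, ENNReal.toReal_inv]
      simp [W, ENNReal.toReal_ofReal hp0.le, ENNReal.toReal_ofReal hp1.le]
    have hBC : ν (B ∩ C) = μ (pairSum ⁻¹' B ∩ pairSum ⁻¹' C) := by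
      rw [hν, Measure.map_apply hps (hBm.inter hCm), Set.preimage_inter]
    have hBeq : ν B = μ (pairSum ⁻¹' B) := by rw [hν, Measure.map_apply hps hBm]
    have hCeq : ν C = μ (pairSum ⁻¹' C) := by rw [hν, Measure.map_apply hps hCm]
    have hle : ν (B ∩ C) ≤ c * (ν B * ν C) := by
      rw [hBC, hBeq, hCeq]
      exact hkey
    have hBfin : ν B ≠ ⊤ := measure_ne_top ν B
    have hCfin : ν C ≠ ⊤ := measure_ne_top ν C
    have hrle : (ν (B ∩ C)).toReal ≤ (p0⁻¹ + p1⁻¹) * ((ν B).toReal * (ν C).toReal) := by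
      have h1 := ENNReal.toReal_mono
        (ENNReal.mul_ne_top hcfin (ENNReal.mul_ne_top hBfin hCfin)) hle
      rwa [ENNReal.toReal_mul, ENNReal.toReal_mul, hctoReal] at h1
    have hd : 0 < (ν B).toReal * (ν C).toReal :=
      mul_pos (ENNReal.toReal_pos hB0 hBfin) (ENNReal.toReal_pos hC0 hCfin)
    have hdiv : (ν (B ∩ C)).toReal / ((ν B).toReal * (ν C).toReal) ≤ p0⁻¹ + p1⁻¹ := by
      rw [div_le_iff₀ hd]
      exact hrle
    have hdivpos : 0 ≤ (ν (B ∩ C)).toReal / ((ν B).toReal * (ν C).toReal) :=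
      div_nonneg ENNReal.toReal_nonneg hd.le
    have hppos : 0 < p0⁻¹ + p1⁻¹ := by positivity
    rw [abs_sub_le_iff]
    constructor <;> linarith

end Nonconv
end
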